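/- Let f : ℝ → ℂ be 2π-periodic and integrable over a period, and let t ∈ ℝ. If ∫_{−π}^{π} |f(t−τ) − f(t)|/|τ| dτ < ∞, then the partial sums of the Fourier series converge at t to f(t): S_n(f)(t) → f(t) as n → ∞. -/

import Mathlib

open Real MeasureTheory Filter

/-- The `n`-th Fourier coefficient of a `2π`-periodic function,
`f̂(n) = (1/2π) ∫_{-π}^{π} f(t) e^{-int} dt`. -/
noncomputable def fourierCoeffT (f : ℝ → ℂ) (n : ℤ) : ℂ :=
  (1 / (2 * π)) • ∫ t in (-π)..π, f t * Complex.exp (-(n : ℂ) * Complex.I * (t : ℂ))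

/-!
Writing `D_n(τ) = ∑_{|j| ≤ n} e^{ijτ}` for the Dirichlet kernel, periodicity gives
`S_n(f)(t) - f(t) = (1/2π) ∫_{-π}^{π} (f(t-τ) - f(t)) D_n(τ) dτ`, and the geometric sum
`D_n(τ) (e^{iτ} - 1) = e^{i(n+1)τ} - e^{-inτ}` turns this integral into the difference of two
Fourier integrals of `G(τ) = (f(t-τ) - f(t)) / (e^{iτ} - 1)`. Since `|e^{iτ} - 1| ≥ 2|τ|/π` on
`[-π, π]`, Dini's condition makes `G` integrable, and both Fourier integrals tend to `0` by the
Riemann–Lebesgue lemma.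
-/

open Topology

theorem tendsto_intervalIntegral_exp_mul_smul_cocompact {E : Type*} [NormedAddCommGroup E]
    [NormedSpace ℂ E] (g : ℝ → E) (a b : ℝ) :
    Tendsto (fun c : ℝ => ∫ x in a..b, Complex.exp (c * x * Complex.I) • g x)
      (cocompact ℝ) (𝓝 0) := by
  have hscale : Tendsto (fun c : ℝ => -(2 * π)⁻¹ * c) (cocompact ℝ) (cocompact ℝ) :=
    tendsto_cocompact_mul_left₀ (by simp [pi_ne_zero])
  have hRL := (Real.tendsto_integral_exp_smul_cocompact ((Set.uIoc a b).indicator g)).comp hscale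
  -- `𝐞 (-(x * w)) = exp (c * x * I)` for `w = -c / (2π)`
  have hind : ∀ c : ℝ,
      (∫ x, Real.fourierChar (-(x * (-(2 * π)⁻¹ * c))) • (Set.uIoc a b).indicator g x)
        = ∫ x in Set.uIoc a b, Complex.exp (c * x * Complex.I) • g x := by
    intro c
    rw [← integral_indicator measurableSet_uIoc]
    congr 1 with x
    by_cases hx : x ∈ Set.uIoc a b
    · simp only [Set.indicator_of_mem hx, Circle.smul_def, Real.fourierChar_apply]
      congr 2
      push_cast
      field_simp
    · simp [Set.indicator_of_notMem hx]
  simp only [intervalIntegral.intervalIntegral_eq_integral_uIoc]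
  simpa only [Function.comp_def, hind, smul_zero] using
    hRL.const_smul (if a ≤ b then (1 : ℝ) else -1)

theorem two_div_pi_mul_abs_le_norm_exp_I_mul_sub_one {x : ℝ} (hx : |x| ≤ π) :
    2 / π * |x| ≤ ‖Complex.exp (Complex.I * x) - 1‖ := by
  have hsin := mul_abs_le_abs_sin (x := x / 2) (by rw [abs_div, abs_two]; linarith)
  rw [Complex.norm_exp_I_mul_ofReal_sub_one, norm_mul, Real.norm_eq_abs, Real.norm_eq_abs,
    abs_two]
  rw [abs_div, abs_two] at hsin
  linarith

theorem sum_Icc_neg_zpow_mul_sub_one {K : Type*} [Field K] {z : K} (hz : z ≠ 0) (n : ℕ) :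
    (∑ j ∈ Finset.Icc (-(n : ℤ)) n, z ^ j) * (z - 1) = z ^ ((n : ℤ) + 1) - z ^ (-(n : ℤ)) := by
  induction n with
  | zero => simp
  | succ n ih =>
    have hIcc : Finset.Icc (-((n + 1 : ℕ) : ℤ)) (n + 1 : ℕ)
        = insert (-((n : ℤ) + 1)) (insert ((n : ℤ) + 1) (Finset.Icc (-(n : ℤ)) n)) := by
      ext; simp only [Finset.mem_Icc, Finset.mem_insert]; omega
    have hup : z ^ ((n : ℤ) + 1 + 1) = z ^ ((n : ℤ) + 1) * z := zpow_add_one₀ hz _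
    have hdown : z ^ (-(n : ℤ)) = z ^ (-((n : ℤ) + 1)) * z := by
      rw [← zpow_add_one₀ hz]; ring_nf
    rw [hIcc, Finset.sum_insert (by simp; omega), Finset.sum_insert (by simp), add_mul, add_mul,
      ih]
    push_cast
    rw [hup, hdown]
    ring

noncomputable def dirichletKernel (n : ℕ) (x : ℝ) : ℂ :=
  ∑ j ∈ Finset.Icc (-(n : ℤ)) n, Complex.exp (j * Complex.I * x)

theorem continuous_dirichletKernel (n : ℕ) : Continuous (dirichletKernel n) := by
  unfold dirichletKernel
  fun_prop

theorem dirichletKernel_periodic (n : ℕ) : Function.Periodic (dirichletKernel n) (2 * π) := by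
  intro x
  refine Finset.sum_congr rfl fun j _ => ?_
  rw [Complex.ofReal_add, mul_add, Complex.exp_add, Complex.ofReal_mul, Complex.ofReal_ofNat,
    show (j : ℂ) * Complex.I * (2 * π) = j * (2 * π * Complex.I) by ring,
    Complex.exp_int_mul_two_pi_mul_I, mul_one]

theorem integral_dirichletKernel (n : ℕ) : ∫ x in -π..π, dirichletKernel n x = 2 * π := by
  unfold dirichletKernel
  rw [intervalIntegral.integral_finsetSum
      fun j _ => (by fun_prop : Continuous _).intervalIntegrable _ _,
    Finset.sum_eq_single_of_mem 0 (by simp)]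
  · simp only [Int.cast_zero, zero_mul, Complex.exp_zero, intervalIntegral.integral_const,
      sub_neg_eq_add, Complex.real_smul, Complex.ofReal_add, mul_one]
    ring
  · intro j _ hj
    have hc : (j : ℂ) * Complex.I ≠ 0 := mul_ne_zero (by exact_mod_cast hj) Complex.I_ne_zero
    rw [integral_exp_mul_complex hc, div_eq_zero_iff, sub_eq_zero]
    left
    rw [Complex.exp_eq_exp_iff_exists_int]
    exact ⟨j, by push_cast; ring⟩

theorem dirichletKernel_mul_exp_I_mul_sub_one (n : ℕ) (x : ℝ) :
    dirichletKernel n x * (Complex.exp (Complex.I * x) - 1)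
      = Complex.exp (((n + 1 : ℝ) : ℂ) * x * Complex.I)
        - Complex.exp ((-n : ℝ) * x * Complex.I) := by
  have hpow : ∀ j : ℤ, Complex.exp (j * Complex.I * x) = Complex.exp (Complex.I * x) ^ j := by
    intro j; rw [← Complex.exp_int_mul]; ring_nf
  have h := sum_Icc_neg_zpow_mul_sub_one (Complex.exp_ne_zero (Complex.I * x)) n
  simp only [dirichletKernel, hpow, h]
  rw [← hpow, ← hpow]
  push_cast
  ring_nf

noncomputable def fourierPartialSum (f : ℝ → ℂ) (n : ℕ) (t : ℝ) : ℂ :=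
  ∑ j ∈ Finset.Icc (-(n : ℤ)) n, fourierCoeffT f j * Complex.exp (j * Complex.I * t)

theorem fourierCoeffT_mul_exp (f : ℝ → ℂ) (j : ℤ) (t : ℝ) :
    fourierCoeffT f j * Complex.exp (j * Complex.I * t)
      = (1 / (2 * π)) • ∫ s in -π..π, f s * Complex.exp (j * Complex.I * (t - s : ℝ)) := by
  rw [fourierCoeffT, smul_mul_assoc, ← intervalIntegral.integral_mul_const]
  refine congrArg _ (intervalIntegral.integral_congr fun s _ => ?_)
  rw [mul_assoc, ← Complex.exp_add]
  push_cast
  ring_nf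

theorem fourierPartialSum_eq_integral_mul_dirichletKernel {f : ℝ → ℂ}
    (hper : Function.Periodic f (2 * π)) (hint : IntervalIntegrable f volume (-π) π)
    (n : ℕ) (t : ℝ) :
    fourierPartialSum f n t = (1 / (2 * π)) • ∫ τ in -π..π, f (t - τ) * dirichletKernel n τ := by
  have hconv : ∑ j ∈ Finset.Icc (-(n : ℤ)) n,
      ∫ s in -π..π, f s * Complex.exp (j * Complex.I * (t - s : ℝ))
        = ∫ s in -π..π, f s * dirichletKernel n (t - s) := by
    rw [← intervalIntegral.integral_finsetSum fun j _ =>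
      hint.mul_continuousOn (by fun_prop)]
    simp only [dirichletKernel, Finset.mul_sum]
  have hperiodic : Function.Periodic (fun τ => f (t - τ) * dirichletKernel n τ) (2 * π) := by
    intro τ
    simp only [sub_add_eq_sub_sub, hper.sub_eq, (dirichletKernel_periodic n) τ]
  have hshift := hperiodic.intervalIntegral_add_eq (t - π) (-π)
  rw [show t - π + 2 * π = t - -π by ring, show -π + 2 * π = π by ring] at hshift
  rw [fourierPartialSum]
  simp only [fourierCoeffT_mul_exp, ← Finset.smul_sum, hconv]
  rw [← hshift, ← intervalIntegral.integral_comp_sub_left]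
  simp only [sub_sub_cancel]

theorem intervalIntegrable_comp_sub_left_of_periodic {f : ℝ → ℂ}
    (hper : Function.Periodic f (2 * π)) (hint : IntervalIntegrable f volume (-π) π) (t : ℝ) :
    IntervalIntegrable (fun τ => f (t - τ)) volume (-π) π := by
  simpa using (hper.intervalIntegrable (by positivity) (t := -π)
    (by rwa [show -π + 2 * π = π by ring]) (t - π) (t + π)).comp_sub_left t |>.symm

theorem fourierPartialSum_sub_eq_integral_mul_dirichletKernel {f : ℝ → ℂ}
    (hper : Function.Periodic f (2 * π)) (hint : IntervalIntegrable f volume (-π) π)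
    (n : ℕ) (t : ℝ) :
    fourierPartialSum f n t - f t
      = (1 / (2 * π)) • ∫ τ in -π..π, (f (t - τ) - f t) * dirichletKernel n τ := by
  have hfτ := intervalIntegrable_comp_sub_left_of_periodic hper hint t
  simp only [sub_mul]
  rw [intervalIntegral.integral_sub
      (hfτ.mul_continuousOn (continuous_dirichletKernel n).continuousOn)
      (((continuous_dirichletKernel n).intervalIntegrable _ _).const_mul (f t)),
    intervalIntegral.integral_const_mul, integral_dirichletKernel, fourierPartialSum_eq_integral_mul_dirichletKernel hper hint,
    smul_sub]
  have hπ : (π : ℂ) ≠ 0 := by exact_mod_cast pi_ne_zero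
  congr 1
  rw [Complex.real_smul]
  push_cast
  field_simp

theorem norm_div_exp_I_mul_sub_one_le {x : ℝ} (hx : |x| ≤ π) (z : ℂ) :
    ‖z / (Complex.exp (Complex.I * x) - 1)‖ ≤ π / 2 * (‖z‖ / |x|) := by
  rcases eq_or_ne x 0 with rfl | hx₀
  · simp
  have hpos : 0 < 2 / π * |x| := by positivity
  calc ‖z / (Complex.exp (Complex.I * x) - 1)‖
      ≤ ‖z‖ / (2 / π * |x|) := by
        rw [norm_div]
        exact div_le_div_of_nonneg_left (norm_nonneg z) hpos
          (two_div_pi_mul_abs_le_norm_exp_I_mul_sub_one hx)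
    _ = π / 2 * (‖z‖ / |x|) := by field_simp

theorem intervalIntegrable_div_exp_I_mul_sub_one {h : ℝ → ℂ}
    (hh : IntervalIntegrable h volume (-π) π)
    (hDini : IntervalIntegrable (fun x => ‖h x‖ / |x|) volume (-π) π) :
    IntervalIntegrable (fun x => h x / (Complex.exp (Complex.I * x) - 1)) volume (-π) π := by
  refine (hDini.const_mul (π / 2)).mono_fun ?_ ?_
  · simp only [div_eq_mul_inv]
    exact hh.aestronglyMeasurable_restrict_uIoc.mul
      (Measurable.aestronglyMeasurable (by fun_prop))
  · refine (ae_restrict_mem measurableSet_uIoc).mono fun x hx => ?_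
    rw [Set.uIoc_of_le (by linarith [pi_pos])] at hx
    have hx' : |x| ≤ π := abs_le.mpr ⟨hx.1.le, hx.2⟩
    exact (norm_div_exp_I_mul_sub_one_le hx' (h x)).trans (le_abs_self _)

theorem integral_mul_dirichletKernel_eq {h : ℝ → ℂ}
    (hG : IntervalIntegrable (fun x => h x / (Complex.exp (Complex.I * x) - 1)) volume (-π) π)
    (n : ℕ) :
    ∫ x in -π..π, h x * dirichletKernel n x
      = (∫ x in -π..π, Complex.exp (((n + 1 : ℝ) : ℂ) * x * Complex.I) *
            (h x / (Complex.exp (Complex.I * x) - 1)))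
        - ∫ x in -π..π, Complex.exp ((-n : ℝ) * x * Complex.I) *
            (h x / (Complex.exp (Complex.I * x) - 1)) := by
  rw [← intervalIntegral.integral_sub (hG.continuousOn_mul (by fun_prop))
    (hG.continuousOn_mul (by fun_prop))]
  refine intervalIntegral.integral_congr_ae ?_
  filter_upwards [Measure.ae_ne volume 0] with x hx₀ hx
  rw [Set.uIoc_of_le (by linarith [pi_pos])] at hx
  have hden : Complex.exp (Complex.I * x) - 1 ≠ 0 := by
    rw [← norm_pos_iff]
    exact lt_of_lt_of_le (by positivity)
      (two_div_pi_mul_abs_le_norm_exp_I_mul_sub_one (abs_le.mpr ⟨hx.1.le, hx.2⟩))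
  rw [← sub_mul, ← dirichletKernel_mul_exp_I_mul_sub_one]
  field_simp

theorem tendsto_integral_mul_dirichletKernel {h : ℝ → ℂ}
    (hG : IntervalIntegrable (fun x => h x / (Complex.exp (Complex.I * x) - 1)) volume (-π) π) :
    Tendsto (fun n => ∫ x in -π..π, h x * dirichletKernel n x) atTop (𝓝 0) := by
  have hRL := tendsto_intervalIntegral_exp_mul_smul_cocompact
    (fun x => h x / (Complex.exp (Complex.I * x) - 1)) (-π) π
  have hsucc : Tendsto (fun n : ℕ => (n + 1 : ℝ)) atTop (cocompact ℝ) :=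
    (tendsto_atTop_add_const_right _ 1 tendsto_natCast_atTop_atTop).mono_right atTop_le_cocompact
  have hneg : Tendsto (fun n : ℕ => (-n : ℝ)) atTop (cocompact ℝ) :=
    (tendsto_neg_atTop_atBot.comp tendsto_natCast_atTop_atTop).mono_right atBot_le_cocompact
  simp_rw [integral_mul_dirichletKernel_eq hG]
  simp only [smul_eq_mul] at hRL
  simpa using (hRL.comp hsucc).sub (hRL.comp hneg)

/-- Dini's convergence test: if `∫_{-π}^{π} |f(t−τ) − f(t)|/|τ| dτ < ∞` then
the Fourier partial sums `S_n(f)(t) = ∑_{j=-n}^{n} f̂(j)e^{ijt}` converge to `f(t)`. -/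
theorem stmt_7 (f : ℝ → ℂ) (hper : Function.Periodic f (2 * π))
    (hint : IntervalIntegrable f volume (-π) π) (t : ℝ)
    (hDini : IntervalIntegrable (fun τ => ‖f (t - τ) - f t‖ / |τ|)
      volume (-π) π) :
    Tendsto (fun n : ℕ => ∑ j ∈ Finset.Icc (-(n : ℤ)) (n : ℤ),
        fourierCoeffT f j * Complex.exp ((j : ℂ) * Complex.I * (t : ℂ)))
      atTop (nhds (f t)) := by
  have hG := intervalIntegrable_div_exp_I_mul_sub_one
    ((intervalIntegrable_comp_sub_left_of_periodic hper hint t).sub intervalIntegrable_const) hDini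
  have hsub := (tendsto_integral_mul_dirichletKernel hG).const_smul (1 / (2 * π))
  rw [smul_zero] at hsub
  refine tendsto_sub_nhds_zero_iff.mp (hsub.congr fun n => ?_)
  exact (fourierPartialSum_sub_eq_integral_mul_dirichletKernel hper hint n t).symm
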